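/- Let S be a strongly admissible additive subsemigroup of ℤ^n × ℤ with Δ(S) ⊆ ℝ^n_{≥0}. If K is a compact subset of Δ(S)^ess, then there exists k₀ ≥ 1 such that K ⊆ Conv(S^{k!})^ess for every integer k ≥ k₀. -/

import Mathlib

/-!
Since `S` is a semigroup, `S^k ⊆ S^m` whenever `k ∣ m`, so `Conv(S^k)^ess ⊆ Conv(S^{m})^ess`;
in particular the sets `Conv(S^{k!})^ess` increase with `k` and exhaust `Δ(S)^ess`. Writing the
relative interior in `ℝ^n_{≥0}` as the trace of an open set of `ℝ^n`, compactness of `K` gives a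
single `k₀` with `K ⊆ Conv(S^{k₀!})^ess`, and monotonicity does the rest.
-/

open Set

noncomputable section

/-- The embedding of the lattice `ℤ^n × ℤ` into `ℝ^n × ℝ`. -/
def latticeEmbed {n : ℕ} (x : (Fin n → ℤ) × ℤ) : (Fin n → ℝ) × ℝ :=
  (fun i => (x.1 i : ℝ), (x.2 : ℝ))

/-- The set of all finite nonnegative linear combinations of elements of `T`. -/
def coneCombos {E : Type*} [AddCommMonoid E] [Module ℝ E] (T : Set E) : Set E :=
  {x | ∃ (k : ℕ) (c : Fin k → ℝ) (t : Fin k → E),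
    (∀ i, 0 ≤ c i) ∧ (∀ i, t i ∈ T) ∧ x = ∑ i, c i • t i}

/-- `C(T)`: the closed convex cone generated by `T`. -/
def closedConeHull {E : Type*} [AddCommMonoid E] [Module ℝ E] [TopologicalSpace E]
    (T : Set E) : Set E :=
  closure (coneCombos T)

/-- The closed convex cone `C(S) ⊆ ℝ^{n+1}` generated by a subset `S ⊆ ℤ^n × ℤ`. -/
def coneOf {n : ℕ} (S : Set ((Fin n → ℤ) × ℤ)) : Set ((Fin n → ℝ) × ℝ) :=
  closedConeHull (latticeEmbed '' S)

/-- The Okounkov convex set `Δ(S) = π(C(S) ∩ (ℝ^n × {1}))`. -/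
def okounkovSet {n : ℕ} (S : Set ((Fin n → ℤ) × ℤ)) : Set (Fin n → ℝ) :=
  Prod.fst '' (coneOf S ∩ {x | x.2 = 1})

/-- `S^k = {α ∈ ℝ^n : kα ∈ ℤ^n and (kα, k) ∈ S}`. -/
def Spow {n : ℕ} (S : Set ((Fin n → ℤ) × ℤ)) (k : ℕ) : Set (Fin n → ℝ) :=
  {α | ∃ β : Fin n → ℤ, (∀ i, (β i : ℝ) = (k : ℝ) * α i) ∧ (β, (k : ℤ)) ∈ S}


/-- `Conv(S^k)`: the closed convex hull of `S^k` in `ℝ^n`. -/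
def convSpow {n : ℕ} (S : Set ((Fin n → ℤ) × ℤ)) (k : ℕ) : Set (Fin n → ℝ) :=
  closure (convexHull ℝ (Spow S k))

/-- The nonnegative orthant `ℝ^n_{≥0}`. -/
def nonnegOrthant (n : ℕ) : Set (Fin n → ℝ) := {x | ∀ i, 0 ≤ x i}

/-- The essential part `A^ess` of a set `A ⊆ ℝ^n_{≥0}`: the interior of `A` in the
subspace topology of `ℝ^n_{≥0}`, viewed as a subset of `ℝ^n`. -/
def essSet {n : ℕ} (A : Set (Fin n → ℝ)) : Set (Fin n → ℝ) :=
  {x | x ∈ A ∧ ∃ U : Set (Fin n → ℝ), IsOpen U ∧ x ∈ U ∧ U ∩ nonnegOrthant n ⊆ A}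

/-- The essential Okounkov body `Δ(S)^ess = ⋃_{k ≥ 1} Conv(S^k)^ess`. -/
def essOkounkov {n : ℕ} (S : Set ((Fin n → ℤ) × ℤ)) : Set (Fin n → ℝ) :=
  ⋃ k : ℕ, ⋃ (_ : 1 ≤ k), essSet (convSpow S k)

theorem succ_nsmul_mem_of_add_mem {M : Type*} [AddMonoid M] {S : Set M}
    (hsemi : ∀ a ∈ S, ∀ b ∈ S, a + b ∈ S) {a : M} (ha : a ∈ S) : ∀ d : ℕ, (d + 1) • a ∈ S
  | 0 => by simpa using ha
  | d + 1 => by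
    rw [succ_nsmul]
    exact hsemi _ (succ_nsmul_mem_of_add_mem hsemi ha d) _ ha

theorem Spow_subset_Spow_of_dvd {n : ℕ} {S : Set ((Fin n → ℤ) × ℤ)}
    (hsemi : ∀ a ∈ S, ∀ b ∈ S, a + b ∈ S) {k m : ℕ} (hkm : k ∣ m) (hm : m ≠ 0) :
    Spow S k ⊆ Spow S m := by
  rintro α ⟨β, hβ, hmem⟩
  obtain ⟨d, rfl⟩ := hkm
  obtain ⟨d, rfl⟩ := Nat.exists_eq_succ_of_ne_zero (right_ne_zero_of_mul hm)
  refine ⟨(d + 1) • β, fun i => ?_, ?_⟩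
  · simp only [Pi.smul_apply, nsmul_eq_mul, Int.cast_mul, Int.cast_natCast, hβ i]
    push_cast
    ring
  · convert succ_nsmul_mem_of_add_mem hsemi hmem d using 1
    ext <;> simp [mul_comm]

theorem convSpow_mono_of_dvd {n : ℕ} {S : Set ((Fin n → ℤ) × ℤ)}
    (hsemi : ∀ a ∈ S, ∀ b ∈ S, a + b ∈ S) {k m : ℕ} (hkm : k ∣ m) (hm : m ≠ 0) :
    convSpow S k ⊆ convSpow S m :=
  closure_mono (convexHull_mono (Spow_subset_Spow_of_dvd hsemi hkm hm))

theorem Spow_subset_okounkovSet {n : ℕ} (S : Set ((Fin n → ℤ) × ℤ)) {k : ℕ} (hk : k ≠ 0) :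
    Spow S k ⊆ okounkovSet S := by
  rintro α ⟨β, hβ, hmem⟩
  have hk' : (k : ℝ) ≠ 0 := Nat.cast_ne_zero.mpr hk
  refine ⟨(α, 1), ⟨subset_closure ?_, rfl⟩, rfl⟩
  refine ⟨1, fun _ => (k : ℝ)⁻¹, fun _ => latticeEmbed (β, (k : ℤ)), fun _ => by positivity,
    fun _ => mem_image_of_mem _ hmem, ?_⟩
  ext <;> simp [latticeEmbed, hβ, hk']

theorem nonnegOrthant_eq_Ici (n : ℕ) : nonnegOrthant n = Ici 0 := rfl

theorem convSpow_subset_nonnegOrthant {n : ℕ} {S : Set ((Fin n → ℤ) × ℤ)}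
    (horth : okounkovSet S ⊆ nonnegOrthant n) {k : ℕ} (hk : k ≠ 0) :
    convSpow S k ⊆ nonnegOrthant n := by
  rw [nonnegOrthant_eq_Ici] at horth ⊢
  exact closure_minimal (convexHull_min ((Spow_subset_okounkovSet S hk).trans horth)
    (convex_Ici 0)) isClosed_Ici

theorem mem_essSet_iff {n : ℕ} {A : Set (Fin n → ℝ)} {x : Fin n → ℝ} :
    x ∈ essSet A ↔ x ∈ A ∧ x ∈ interior (A ∪ (nonnegOrthant n)ᶜ) := by
  have h (U : Set (Fin n → ℝ)) : U ∩ nonnegOrthant n ⊆ A ↔ U ⊆ A ∪ (nonnegOrthant n)ᶜ := by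
    rw [inter_subset, union_comm]
  simp only [essSet, mem_ofPred_eq, mem_interior, h]
  exact and_congr_right fun _ => exists_congr fun U => by tauto

theorem subset_essSet_of_subset_interior {n : ℕ} {A K : Set (Fin n → ℝ)}
    (hK : K ⊆ nonnegOrthant n) (hKA : K ⊆ interior (A ∪ (nonnegOrthant n)ᶜ)) :
    K ⊆ essSet A := fun _ hx =>
  mem_essSet_iff.mpr ⟨(interior_subset (hKA hx)).resolve_right (not_not.mpr (hK hx)), hKA hx⟩

theorem essOkounkov_subset_nonnegOrthant {n : ℕ} {S : Set ((Fin n → ℤ) × ℤ)}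
    (horth : okounkovSet S ⊆ nonnegOrthant n) : essOkounkov S ⊆ nonnegOrthant n := by
  simp only [essOkounkov, iUnion_subset_iff]
  exact fun k hk x hx => convSpow_subset_nonnegOrthant horth (by omega) hx.1

theorem monotone_interior_convSpow_factorial_union_compl {n : ℕ} {S : Set ((Fin n → ℤ) × ℤ)}
    (hsemi : ∀ a ∈ S, ∀ b ∈ S, a + b ∈ S) :
    Monotone fun k : ℕ => interior (convSpow S k.factorial ∪ (nonnegOrthant n)ᶜ) :=
  fun _ l hkl => interior_mono (union_subset_union_left _
    (convSpow_mono_of_dvd hsemi (Nat.factorial_dvd_factorial hkl) l.factorial_ne_zero))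

theorem essOkounkov_subset_iUnion_interior_factorial {n : ℕ} {S : Set ((Fin n → ℤ) × ℤ)}
    (hsemi : ∀ a ∈ S, ∀ b ∈ S, a + b ∈ S) :
    essOkounkov S ⊆ ⋃ k : ℕ, interior (convSpow S k.factorial ∪ (nonnegOrthant n)ᶜ) := by
  simp only [essOkounkov, iUnion_subset_iff]
  intro k hk x hx
  refine mem_iUnion.mpr ⟨k, interior_mono (union_subset_union_left _ ?_) (mem_essSet_iff.mp hx).2⟩
  exact convSpow_mono_of_dvd hsemi (Nat.dvd_factorial hk le_rfl) k.factorial_ne_zero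

theorem compact_subset_essSet_convSpow_factorial_general (n : ℕ)
    (S : Set ((Fin n → ℤ) × ℤ))
    (hsemi : ∀ a ∈ S, ∀ b ∈ S, a + b ∈ S)
    (horth : okounkovSet S ⊆ nonnegOrthant n)
    (K : Set (Fin n → ℝ)) (hK : IsCompact K)
    (hKsub : K ⊆ essOkounkov S) :
    ∃ k₀ : ℕ, 1 ≤ k₀ ∧ ∀ k : ℕ, k₀ ≤ k → K ⊆ essSet (convSpow S (Nat.factorial k)) := by
  have hmono := monotone_interior_convSpow_factorial_union_compl (n := n) hsemi
  obtain ⟨k₁, hk₁⟩ := hK.elim_directed_cover _ (fun _ => isOpen_interior)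
    (hKsub.trans (essOkounkov_subset_iUnion_interior_factorial hsemi)) hmono.directed_le
  refine ⟨max 1 k₁, le_max_left _ _, fun k hk => ?_⟩
  exact subset_essSet_of_subset_interior
    (hKsub.trans (essOkounkov_subset_nonnegOrthant horth))
    (hk₁.trans (hmono ((le_max_right _ _).trans hk)))

/-- For a strongly admissible additive subsemigroup `S ⊆ ℤ^n × ℤ` with
`Δ(S) ⊆ ℝ^n_{≥0}` and a compact subset `K ⊆ Δ(S)^ess`, there exists `k₀ ≥ 1` such that
`K ⊆ Conv(S^{k!})^ess` for every `k ≥ k₀`. -/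
theorem compact_subset_essSet_convSpow_factorial (n : ℕ) (hn : 1 ≤ n)
    (S : Set ((Fin n → ℤ) × ℤ))
    (hsemi : ∀ a ∈ S, ∀ b ∈ S, a + b ∈ S)
    (hadm : ∀ a ∈ S, 0 ≤ a.2)
    (hstrong : coneOf S ∩ {x | x.2 = 0} = {0})
    (horth : okounkovSet S ⊆ nonnegOrthant n)
    (K : Set (Fin n → ℝ)) (hK : IsCompact K)
    (hKsub : K ⊆ essOkounkov S) :
    ∃ k₀ : ℕ, 1 ≤ k₀ ∧ ∀ k : ℕ, k₀ ≤ k → K ⊆ essSet (convSpow S (Nat.factorial k)) :=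
  compact_subset_essSet_convSpow_factorial_general n S hsemi horth K hK hKsub
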